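/- Let c_k = cos(πk/65) and set u₁ = (7 − 10c₂₀ − 10c₃₀)/65, u₂ = (7 + 10c₈ + 10c₁₈ − 10c₂₁ + 10c₂₅ − 10c₃₁)/65, u₃ = (12 − 10c₈ − 10c₁₈ + 10c₂₀ + 10c₂₁ − 10c₂₅ + 10c₃₀ + 10c₃₁)/65. Then each of u₁, u₂, u₃ is a root of the polynomial 21125λ³ − 8450λ² + 585λ − 1, and u₁, u₂, u₃ are pairwise distinct (so they are exactly its three roots). -/
import Mathlib

open Real

/-- `c_k = cos(πk/65)`. -/
noncomputable def c65 (k : ℕ) : ℝ := Real.cos (π * k / 65)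

noncomputable def u₁ : ℝ := (7 - 10 * c65 20 - 10 * c65 30) / 65
noncomputable def u₂ : ℝ :=
  (7 + 10 * c65 8 + 10 * c65 18 - 10 * c65 21 + 10 * c65 25 - 10 * c65 31) / 65
noncomputable def u₃ : ℝ :=
  (12 - 10 * c65 8 - 10 * c65 18 + 10 * c65 20 + 10 * c65 21 - 10 * c65 25 +
    10 * c65 30 + 10 * c65 31) / 65

noncomputable def zz : ℂ := Complex.exp (Real.pi * Complex.I / 65)

lemma hz65 : zz ^ 65 = -1 := by
  rw [zz, ← Complex.exp_nat_mul]
  have : ((65:ℕ):ℂ) * (Real.pi * Complex.I / 65) = Real.pi * Complex.I := by push_cast; ring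
  rw [this, Complex.exp_pi_mul_I]

lemma hz130 : zz ^ 130 = 1 := by
  have : zz ^ 130 = (zz ^ 65) ^ 2 := by ring
  rw [this, hz65]; ring

lemma hzpow (n : ℕ) : zz ^ n = Complex.exp (n * (Real.pi * Complex.I / 65)) := by
  rw [zz, ← Complex.exp_nat_mul]

lemma hzne (n : ℕ) (hn : 0 < n) (hn' : n < 130) : zz ^ n ≠ 1 := by
  rw [hzpow]
  intro hone
  rw [Complex.exp_eq_one_iff] at hone
  obtain ⟨m, hm⟩ := hone
  have hπI : (Real.pi : ℂ) * Complex.I ≠ 0 :=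
    mul_ne_zero (Complex.ofReal_ne_zero.mpr Real.pi_ne_zero) Complex.I_ne_zero
  have key : ((n : ℂ) - 130 * m) * ((Real.pi : ℂ) * Complex.I) = 0 := by
    linear_combination 65 * hm
  have h0 : ((n : ℂ) - 130 * m) = 0 := (mul_eq_zero.mp key).resolve_right hπI
  have h1 : ((n : ℂ)) = 130 * m := by linear_combination h0
  have h2 : (n : ℤ) = 130 * m := by exact_mod_cast h1
  omega

lemma h13 : 1 + zz^10 + zz^20 + zz^30 + zz^40 + zz^50 + zz^60 + zz^70 + zz^80 + zz^90
    + zz^100 + zz^110 + zz^120 = 0 := by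
  have hne : zz ^ 10 - 1 ≠ 0 := sub_ne_zero.mpr (hzne 10 (by norm_num) (by norm_num))
  have h : (zz ^ 10 - 1) * (1 + zz^10 + zz^20 + zz^30 + zz^40 + zz^50 + zz^60 + zz^70
      + zz^80 + zz^90 + zz^100 + zz^110 + zz^120) = zz ^ 130 - 1 := by ring
  rw [hz130, sub_self] at h
  exact (mul_eq_zero.mp h).resolve_left hne

lemma h5 : 1 + zz^26 + zz^52 + zz^78 + zz^104 = 0 := by
  have hne : zz ^ 26 - 1 ≠ 0 := sub_ne_zero.mpr (hzne 26 (by norm_num) (by norm_num))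
  have h : (zz ^ 26 - 1) * (1 + zz^26 + zz^52 + zz^78 + zz^104) = zz ^ 130 - 1 := by ring
  rw [hz130, sub_self] at h
  exact (mul_eq_zero.mp h).resolve_left hne

lemma hcc (k m : ℕ) (h : k + m = 65) : ((c65 k : ℝ) : ℂ) = (zz ^ k - zz ^ m) / 2 := by
  have hzk : zz ^ k ≠ 0 := pow_ne_zero _ (by rw [zz]; exact Complex.exp_ne_zero _)
  have hm : zz ^ m = -(zz ^ k)⁻¹ := by
    have h65 : zz ^ k * zz ^ m = -1 := by rw [← pow_add, h]; exact hz65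
    field_simp
    linear_combination h65
  have hk : Complex.exp ((π * k / 65 : ℝ) * Complex.I) = zz ^ k := by
    rw [hzpow]; congr 1; push_cast; ring
  rw [c65, Complex.ofReal_cos, Complex.cos, neg_mul, Complex.exp_neg, hk, hm]
  ring

lemma hcc8 : ((c65 8 : ℝ) : ℂ) = (zz ^ 8 - zz ^ 57) / 2 := by
  have := hcc 8 57 rfl
  simpa using this
lemma hcc18 : ((c65 18 : ℝ) : ℂ) = (zz ^ 18 - zz ^ 47) / 2 := by
  have := hcc 18 47 rfl
  simpa using this
lemma hcc20 : ((c65 20 : ℝ) : ℂ) = (zz ^ 20 - zz ^ 45) / 2 := by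
  have := hcc 20 45 rfl
  simpa using this
lemma hcc21 : ((c65 21 : ℝ) : ℂ) = (zz ^ 21 - zz ^ 44) / 2 := by
  have := hcc 21 44 rfl
  simpa using this
lemma hcc25 : ((c65 25 : ℝ) : ℂ) = (zz ^ 25 - zz ^ 40) / 2 := by
  have := hcc 25 40 rfl
  simpa using this
lemma hcc30 : ((c65 30 : ℝ) : ℂ) = (zz ^ 30 - zz ^ 35) / 2 := by
  have := hcc 30 35 rfl
  simpa using this
lemma hcc31 : ((c65 31 : ℝ) : ℂ) = (zz ^ 31 - zz ^ 34) / 2 := by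
  have := hcc 31 34 rfl
  simpa using this

lemma he2 : u₁ * u₂ + u₁ * u₃ + u₂ * u₃ = 9/325 := by
  have key : ((u₁ * u₂ + u₁ * u₃ + u₂ * u₃ : ℝ) : ℂ) = ((9/325 : ℝ) : ℂ) := by
    rw [u₁, u₂, u₃]
    push_cast [hcc8, hcc18, hcc20, hcc21, hcc25, hcc30, hcc31]
    have h65 := hz65
    have h13 := h13
    have h5 := h5
    linear_combination ((-2/169) * zz ^ 59 + (2/169) * zz ^ 58 + (-2/169) * zz ^ 57 + (2/169) * zz ^ 56 + (2/169) * zz ^ 55 + (-1/169) * zz ^ 50 + (2/169) * zz ^ 49 + (3/169) * zz ^ 48 + (-1/169) * zz ^ 47 + (2/169) * zz ^ 46 + (2/169) * zz ^ 45 + (-1/169) * zz ^ 44 + (-1/169) * zz ^ 43 + (-5/169) * zz ^ 42 + (1/169) * zz ^ 41 + (4/169) * zz ^ 39 + (2/169) * zz ^ 38 + (-1/169) * zz ^ 37 + (4/169) * zz ^ 36 + (2/169) * zz ^ 35 + (-2/169) * zz ^ 32 + (-3/169) * zz ^ 29 + (2/169) * zz ^ 28 + (6/169) * zz ^ 26 +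 (1/169) * zz ^ 25 + (-2/169) * zz ^ 24 + (2/169) * zz ^ 23 + (-2/169) * zz ^ 22 + (1/169) * zz ^ 21 + (1/169) * zz ^ 20 + (1/169) * zz ^ 18 + (-1/169) * zz ^ 16 + (-2/169) * zz ^ 14 + (2/169) * zz ^ 13 + (-2/169) * zz ^ 12 + (1/169) * zz ^ 11 + (7/169) * zz ^ 10 + (1/169) * zz ^ 9 + (2/169) * zz ^ 8 + (-1/169) * zz ^ 5 + (-3/169) * zz ^ 4 + (-3/169) * zz ^ 3 + (-1/169) * zz ^ 2 + (2/169) * zz + (14/169) * 1) * h65 + ((2/169) * zz ^ 4 + (-2/169) * zz ^ 3 + (2/169) * zz ^ 2 + (-2/169) * zz + (-2/169) * 1) * h13 + ((1/169) * zz ^ 11 + (-5/169) * zz ^ 10 + (-1/169) * zz ^ 9 + (-1/169) * zz ^ 8 + (1/169) * zz ^ 5 + (1/169) * zz ^ 4 + (5/169) * zz ^ 3 + (-1/169) * zz ^ 2 + (-8/169) * 1) * h5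
  exact_mod_cast key

lemma he3 : u₁ * u₂ * u₃ = 1/21125 := by
  have key : ((u₁ * u₂ * u₃ : ℝ) : ℂ) = ((1/21125 : ℝ) : ℂ) := by
    rw [u₁, u₂, u₃]
    push_cast [hcc8, hcc18, hcc20, hcc21, hcc25, hcc30, hcc31]
    have h65 := hz65
    have h13 := h13
    have h5 := h5
    linear_combination ((-1/2197) * zz ^ 94 + (-3/2197) * zz ^ 84 + (1/2197) * zz ^ 82 + (2/2197) * zz ^ 81 + (1/2197) * zz ^ 79 + (-2/2197) * zz ^ 77 + (-3/2197) * zz ^ 74 + (3/2197) * zz ^ 72 + (6/2197) * zz ^ 71 + (2/2197) * zz ^ 69 + (-3/2197) * zz ^ 68 + (-6/2197) * zz ^ 67 + (-2/2197) * zz ^ 66 + (1/2197) * zz ^ 65 + (1/2197) * zz ^ 64 + (7/2197) * zz ^ 62 + (6/2197) * zz ^ 61 + (-1/2197) * zz ^ 60 + (-9/10985) * zz ^ 59 + (-36/10985) * zz ^ 58 + (-49/10985) * zz ^ 57 + (-16/10985) * zz ^ 56 + (-6/10985) * zz ^ 55 + (6/2197) * zz ^ 54 + (3/2197) * zz ^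 53 + (10/2197) * zz ^ 52 + (-57/10985) * zz ^ 50 + (4/10985) * zz ^ 49 + (11/10985) * zz ^ 48 + (-7/10985) * zz ^ 47 + (29/10985) * zz ^ 46 + (9/10985) * zz ^ 45 + (-2/10985) * zz ^ 44 + (-7/10985) * zz ^ 43 + (-6/2197) * zz ^ 42 + (7/10985) * zz ^ 41 + (-10/2197) * zz ^ 40 + (28/10985) * zz ^ 39 + (4/10985) * zz ^ 38 + (-37/10985) * zz ^ 37 + (48/10985) * zz ^ 36 + (54/10985) * zz ^ 35 + (8/2197) * zz ^ 34 + (6/2197) * zz ^ 33 + (-44/10985) * zz ^ 32 + (-8/2197) * zz ^ 31 + (-18/2197) * zz ^ 30 + (-36/10985) * zz ^ 29 + (3/845) * zz ^ 28 + (87/10985) * zz ^ 26 + (7/10985) * zz ^ 25 + (-9/10985) * zz ^ 24 + (9/10985) * zz ^ 23 + (-9/10985) * zz ^ 22 + (2/10985) * zz ^ 21 + (-43/10985) * zz ^ 20 + (7/10985) * zz ^ 18 + (-7/10985) * zz ^ 16 + (-9/10985) * zz ^ 14 + (9/10985) * zz ^ 13 + (-9/10985) * zz ^ 12 + (-28/10985)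 * zz ^ 11 + (14/10985) * zz ^ 10 + (47/10985) * zz ^ 9 + (49/10985) * zz ^ 8 + (7/2197) * zz ^ 7 + (-7/2197) * zz ^ 6 + (-42/10985) * zz ^ 5 + (-56/10985) * zz ^ 4 + (-41/10985) * zz ^ 3 + (28/10985) * zz ^ 2 + (9/10985) * zz + (88/10985) * 1) * h65 + ((9/10985) * zz ^ 4 + (-9/10985) * zz ^ 3 + (9/10985) * zz ^ 2 + (-9/10985) * zz + (36/10985) * 1) * h13 + ((37/10985) * zz ^ 11 + (-10/2197) * zz ^ 10 + (-47/10985) * zz ^ 9 + (-42/10985) * zz ^ 8 + (-7/2197) * zz ^ 7 + (7/2197) * zz ^ 6 + (42/10985) * zz ^ 5 + (47/10985) * zz ^ 4 + (10/2197) * zz ^ 3 + (-37/10985) * zz ^ 2 + (-101/10985) * 1) * h5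
  exact_mod_cast key

lemma he1 : u₁ + u₂ + u₃ = 2/5 := by
  rw [u₁, u₂, u₃]; ring


lemma cb8 : (1157/1250 : ℝ) < c65 8 ∧ c65 8 < 9263/10000 := by
  have hπ1 := Real.pi_gt_d6
  have hπ2 := Real.pi_lt_d6
  have hsq : π ^ 2 < 9.8696066 := by nlinarith
  have hsq' : 9.8696002 < π ^ 2 := by nlinarith
  have hq : π ^ 4 < 97.409134 := by nlinarith
  have heq : (π * (8:ℕ) / 65 : ℝ) = 2 * (π * 8 / 130) := by push_cast; ring
  rw [c65, heq, Real.cos_two_mul]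
  have ht : |π * 8 / 130| ≤ 1 := by
    rw [abs_of_nonneg (by positivity)]
    nlinarith
  have hb := Real.cos_bound ht
  rw [abs_of_nonneg (show (0:ℝ) ≤ π * 8 / 130 by positivity), abs_le] at hb
  have h1 := hb.1
  have h2 := hb.2
  constructor <;> nlinarith [sq_nonneg (π * 8 / 130)]

lemma cb18 : (6327/10000 : ℝ) < c65 18 ∧ c65 18 < 6463/10000 := by
  have hπ1 := Real.pi_gt_d6
  have hπ2 := Real.pi_lt_d6
  have hsq : π ^ 2 < 9.8696066 := by nlinarith
  have hsq' : 9.8696002 < π ^ 2 := by nlinarith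
  have hq : π ^ 4 < 97.409134 := by nlinarith
  have heq : (π * (18:ℕ) / 65 : ℝ) = 2 * (π * 18 / 130) := by push_cast; ring
  rw [c65, heq, Real.cos_two_mul]
  have ht : |π * 18 / 130| ≤ 1 := by
    rw [abs_of_nonneg (by positivity)]
    nlinarith
  have hb := Real.cos_bound ht
  rw [abs_of_nonneg (show (0:ℝ) ≤ π * 18 / 130 by positivity), abs_le] at hb
  have h1 := hb.1
  have h2 := hb.2
  constructor <;> nlinarith [sq_nonneg (π * 18 / 130)]

lemma cb20 : (11/20 : ℝ) < c65 20 ∧ c65 20 < 2851/5000 := by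
  have hπ1 := Real.pi_gt_d6
  have hπ2 := Real.pi_lt_d6
  have hsq : π ^ 2 < 9.8696066 := by nlinarith
  have hsq' : 9.8696002 < π ^ 2 := by nlinarith
  have hq : π ^ 4 < 97.409134 := by nlinarith
  have heq : (π * (20:ℕ) / 65 : ℝ) = 2 * (π * 20 / 130) := by push_cast; ring
  rw [c65, heq, Real.cos_two_mul]
  have ht : |π * 20 / 130| ≤ 1 := by
    rw [abs_of_nonneg (by positivity)]
    nlinarith
  have hb := Real.cos_bound ht
  rw [abs_of_nonneg (show (0:ℝ) ≤ π * 20 / 130 by positivity), abs_le] at hb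
  have h1 := hb.1
  have h2 := hb.2
  constructor <;> nlinarith [sq_nonneg (π * 20 / 130)]

lemma cb21 : (253/500 : ℝ) < c65 21 ∧ c65 21 < 2651/5000 := by
  have hπ1 := Real.pi_gt_d6
  have hπ2 := Real.pi_lt_d6
  have hsq : π ^ 2 < 9.8696066 := by nlinarith
  have hsq' : 9.8696002 < π ^ 2 := by nlinarith
  have hq : π ^ 4 < 97.409134 := by nlinarith
  have heq : (π * (21:ℕ) / 65 : ℝ) = 2 * (π * 21 / 130) := by push_cast; ring
  rw [c65, heq, Real.cos_two_mul]
  have ht : |π * 21 / 130| ≤ 1 := by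
    rw [abs_of_nonneg (by positivity)]
    nlinarith
  have hb := Real.cos_bound ht
  rw [abs_of_nonneg (show (0:ℝ) ≤ π * 21 / 130 by positivity), abs_le] at hb
  have h1 := hb.1
  have h2 := hb.2
  constructor <;> nlinarith [sq_nonneg (π * 21 / 130)]

lemma cb25 : (157/500 : ℝ) < c65 25 ∧ c65 25 < 1797/5000 := by
  have hπ1 := Real.pi_gt_d6
  have hπ2 := Real.pi_lt_d6
  have hsq : π ^ 2 < 9.8696066 := by nlinarith
  have hsq' : 9.8696002 < π ^ 2 := by nlinarith
  have hq : π ^ 4 < 97.409134 := by nlinarith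
  have heq : (π * (25:ℕ) / 65 : ℝ) = 2 * (π * 25 / 130) := by push_cast; ring
  rw [c65, heq, Real.cos_two_mul]
  have ht : |π * 25 / 130| ≤ 1 := by
    rw [abs_of_nonneg (by positivity)]
    nlinarith
  have hb := Real.cos_bound ht
  rw [abs_of_nonneg (show (0:ℝ) ≤ π * 25 / 130 by positivity), abs_le] at hb
  have h1 := hb.1
  have h2 := hb.2
  constructor <;> nlinarith [sq_nonneg (π * 25 / 130)]

lemma cb30 : (449/10000 : ℝ) < c65 30 ∧ c65 30 < 649/5000 := by
  have hπ1 := Real.pi_gt_d6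
  have hπ2 := Real.pi_lt_d6
  have hsq : π ^ 2 < 9.8696066 := by nlinarith
  have hsq' : 9.8696002 < π ^ 2 := by nlinarith
  have hq : π ^ 4 < 97.409134 := by nlinarith
  have heq : (π * (30:ℕ) / 65 : ℝ) = 2 * (π * 30 / 130) := by push_cast; ring
  rw [c65, heq, Real.cos_two_mul]
  have ht : |π * 30 / 130| ≤ 1 := by
    rw [abs_of_nonneg (by positivity)]
    nlinarith
  have hb := Real.cos_bound ht
  rw [abs_of_nonneg (show (0:ℝ) ≤ π * 30 / 130 by positivity), abs_le] at hb
  have h1 := hb.1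
  have h2 := hb.2
  constructor <;> nlinarith [sq_nonneg (π * 30 / 130)]

lemma cb31 : (-117/10000 : ℝ) < c65 31 ∧ c65 31 < 207/2500 := by
  have hπ1 := Real.pi_gt_d6
  have hπ2 := Real.pi_lt_d6
  have hsq : π ^ 2 < 9.8696066 := by nlinarith
  have hsq' : 9.8696002 < π ^ 2 := by nlinarith
  have hq : π ^ 4 < 97.409134 := by nlinarith
  have heq : (π * (31:ℕ) / 65 : ℝ) = 2 * (π * 31 / 130) := by push_cast; ring
  rw [c65, heq, Real.cos_two_mul]
  have ht : |π * 31 / 130| ≤ 1 := by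
    rw [abs_of_nonneg (by positivity)]
    nlinarith
  have hb := Real.cos_bound ht
  rw [abs_of_nonneg (show (0:ℝ) ≤ π * 31 / 130 by positivity), abs_le] at hb
  have h1 := hb.1
  have h2 := hb.2
  constructor <;> nlinarith [sq_nonneg (π * 31 / 130)]


lemma hsep1 : u₁ < 1/25 := by
  rw [u₁]; nlinarith [cb20.1, cb30.1]

lemma hsep2 : (1/25 : ℝ) < u₃ := by
  rw [u₃]; nlinarith [cb8.2, cb18.2, cb20.1, cb21.1, cb25.2, cb30.1, cb31.1]

lemma hsep3 : u₃ < 1/5 := by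
  rw [u₃]; nlinarith [cb8.1, cb18.1, cb20.2, cb21.2, cb25.1, cb30.2, cb31.2]

lemma hsep4 : (1/5 : ℝ) < u₂ := by
  rw [u₂]; nlinarith [cb8.1, cb18.1, cb21.2, cb25.1, cb31.2]

theorem stmt_16 :
    (21125 * u₁ ^ 3 - 8450 * u₁ ^ 2 + 585 * u₁ - 1 = 0) ∧
    (21125 * u₂ ^ 3 - 8450 * u₂ ^ 2 + 585 * u₂ - 1 = 0) ∧
    (21125 * u₃ ^ 3 - 8450 * u₃ ^ 2 + 585 * u₃ - 1 = 0) ∧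
    u₁ ≠ u₂ ∧ u₁ ≠ u₃ ∧ u₂ ≠ u₃ := by
  have e1 := he1
  have e2 := he2
  have e3 := he3
  refine ⟨?_, ?_, ?_, ?_, ?_, ?_⟩
  · linear_combination (21125 * u₁ ^ 2) * e1 + (-21125 * u₁) * e2 + 21125 * e3
  · linear_combination (21125 * u₂ ^ 2) * e1 + (-21125 * u₂) * e2 + 21125 * e3
  · linear_combination (21125 * u₃ ^ 2) * e1 + (-21125 * u₃) * e2 + 21125 * e3
  · exact ne_of_lt (lt_trans (lt_trans hsep1 hsep2) (lt_trans hsep3 hsep4))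
  · exact ne_of_lt (lt_trans hsep1 hsep2)
  · exact ne_of_gt (lt_trans hsep3 hsep4)
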